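/- Define A_H : ℝ³ → ℝ³ by A_H(x, y, t) = (x − 3/2, y − √7/2, t + 2√7 + 3y − √7·x), and define L : ℝ → ℝ³ by L(x) = (−3x/2 + 5/4, −√7·x/2 + √7/5, 27√7·x/20 − 3√7/4). Then: (i) for all x ∈ ℝ, A_H(L(x)) = L(x+1); (ii) for all x ∈ [1/3, 1], writing L(x) = (u, v, s), one has (u² + v²)² + s² < 4; (iii) for all x ∈ [0, 1/3], writing L(x) = (u, v, s), one has ((u − 2)² + v²)² + (s + 4v)² < 4. -/
import Mathlib


/-- The Heisenberg action of the parabolic generator A of the even subgroup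
of Δ(3,4,∞;∞), on ℝ³ ≅ ℂ × ℝ. -/
noncomputable def AHeis : ℝ × ℝ × ℝ → ℝ × ℝ × ℝ :=
  fun p => (p.1 - 3/2, p.2.1 - Real.sqrt 7 / 2,
            p.2.2 + 2 * Real.sqrt 7 + 3 * p.2.1 - Real.sqrt 7 * p.1)

/-- The A-invariant affine line L in the Heisenberg group. -/
noncomputable def Lline : ℝ → ℝ × ℝ × ℝ :=
  fun x => (-3 * x / 2 + 5/4, -Real.sqrt 7 * x / 2 + Real.sqrt 7 / 5,
            27 * Real.sqrt 7 * x / 20 - 3 * Real.sqrt 7 / 4)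

theorem line_invariant_and_inside_spheres :
    (∀ x : ℝ, AHeis (Lline x) = Lline (x + 1)) ∧
    (∀ x ∈ Set.Icc (1/3 : ℝ) 1,
      ((Lline x).1 ^ 2 + (Lline x).2.1 ^ 2) ^ 2 + (Lline x).2.2 ^ 2 < 4) ∧
    (∀ x ∈ Set.Icc (0 : ℝ) (1/3),
      (((Lline x).1 - 2) ^ 2 + (Lline x).2.1 ^ 2) ^ 2 +
        ((Lline x).2.2 + 4 * (Lline x).2.1) ^ 2 < 4) := by
  have h7 : Real.sqrt 7 * Real.sqrt 7 = 7 := Real.mul_self_sqrt (by norm_num)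
  refine ⟨fun x => ?_, fun x hx => ?_, fun x hx => ?_⟩
  · simp only [AHeis, Lline, Prod.mk.injEq]
    refine ⟨by ring, by ring, by ring⟩
  · obtain ⟨h1, h2⟩ := hx
    simp only [Lline]
    have e : ((-3 * x / 2 + 5/4) ^ 2 + (-Real.sqrt 7 * x / 2 + Real.sqrt 7 / 5) ^ 2) ^ 2 +
        (27 * Real.sqrt 7 * x / 20 - 3 * Real.sqrt 7 / 4) ^ 2 =
        ((-3 * x / 2 + 5/4) ^ 2 + 7 * (x/2 - 1/5) ^ 2) ^ 2 + 7 * (27 * x / 20 - 3/4) ^ 2 := by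
      linear_combination ((x/2 - 1/5)^2 * (2*(-3*x/2+5/4)^2 +
        (-Real.sqrt 7*x/2+Real.sqrt 7/5)^2 + 7*(x/2-1/5)^2) + (27*x/20-3/4)^2) * h7
    rw [e]
    nlinarith [sq_nonneg (x - 1/3), sq_nonneg (1 - x),
      mul_nonneg (sub_nonneg.2 h1) (sub_nonneg.2 h2), sq_nonneg ((x-1/3)*(1-x)),
      mul_nonneg (mul_nonneg (sub_nonneg.2 h1) (sub_nonneg.2 h2)) (sub_nonneg.2 h1),
      mul_nonneg (mul_nonneg (sub_nonneg.2 h1) (sub_nonneg.2 h2)) (sub_nonneg.2 h2)]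
  · obtain ⟨h1, h2⟩ := hx
    simp only [Lline]
    have e : ((-3 * x / 2 + 5/4 - 2) ^ 2 + (-Real.sqrt 7 * x / 2 + Real.sqrt 7 / 5) ^ 2) ^ 2 +
        (27 * Real.sqrt 7 * x / 20 - 3 * Real.sqrt 7 / 4 +
          4 * (-Real.sqrt 7 * x / 2 + Real.sqrt 7 / 5)) ^ 2 =
        ((-3 * x / 2 + 5/4 - 2) ^ 2 + 7 * (x/2 - 1/5) ^ 2) ^ 2 + 7 * (-13*x/20 + 1/20) ^ 2 := by
      linear_combination ((x/2 - 1/5)^2 * (2*(-3*x/2+5/4-2)^2 +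
        (-Real.sqrt 7*x/2+Real.sqrt 7/5)^2 + 7*(x/2-1/5)^2) + (-13*x/20+1/20)^2) * h7
    rw [e]
    nlinarith [sq_nonneg x, sq_nonneg (1/3 - x),
      mul_nonneg h1 (sub_nonneg.2 h2), sq_nonneg (x*(1/3-x)),
      mul_nonneg (mul_nonneg h1 (sub_nonneg.2 h2)) h1,
      mul_nonneg (mul_nonneg h1 (sub_nonneg.2 h2)) (sub_nonneg.2 h2)]
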